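/- arXiv:1005.2216 — 2 statements merged into one kernel-verified Lean document; each statement's English description precedes it below -/
import Mathlib

section
/- For n ≥ 3, the number of partial permutations of length n with 2 holes avoiding the pattern 2413 is 3n−6; the same holds for the pattern 3142. For the specific hole set H = {i,j} with 1 ≤ i < j ≤ n, s_n^H(2413) = 1 if at least one of the three intervals [1,i−1], [i+1,j−1], [j+1,n] is empty, and s_n^H(2413) = 0 otherwise. -/
open Finset

/-- The word `σ` contains the pattern `p`: there is a subsequence of `σ`
order-isomorphic to `p`. -/
def ContainsPat {n ℓ : ℕ} {α β : Type*} [LinearOrder α] [LinearOrder β]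
    (σ : Fin n → α) (p : Fin ℓ → β) : Prop :=
  ∃ g : Fin ℓ → Fin n, StrictMono g ∧ ∀ a b : Fin ℓ, σ (g a) < σ (g b) ↔ p a < p b

/-- `σ ∈ S_n` is an extension of the partial permutation `π`: on the non-hole
positions, the relative order of the values of `σ` matches that of `π`. -/
def IsExtension {n : ℕ} {α : Type*} [LinearOrder α]
    (σ : Equiv.Perm (Fin n)) (π : Fin n → Option α) : Prop :=
  ∀ i j : Fin n, ∀ vi vj : α, π i = some vi → π j = some vj → (σ i < σ j ↔ vi < vj)

/-- The partial permutation `π` avoids the pattern `p`: every extension avoids `p`. -/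
def PPAvoids {n ℓ : ℕ} {α β : Type*} [LinearOrder α] [LinearOrder β]
    (π : Fin n → Option α) (p : Fin ℓ → β) : Prop :=
  ∀ σ : Equiv.Perm (Fin n), IsExtension σ π → ¬ ContainsPat (⇑σ) p

/-- `π` is a partial permutation of length `n` with `k` holes: each value of
`{1,…,n-k}` appears exactly once and there are exactly `k` holes. -/
def IsPPerm {n : ℕ} (k : ℕ) (π : Fin n → Option (Fin (n - k))) : Prop :=
  (Finset.univ.filter fun i => π i = none).card = k ∧
    ∀ v : Fin (n - k), ∃! i : Fin n, π i = some v

/-- `π` is a partial permutation whose holes are exactly at the positions in `H`. -/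
def IsPPermH {n : ℕ} (H : Finset (Fin n)) (π : Fin n → Option (Fin (n - H.card))) : Prop :=
  (∀ i, π i = none ↔ i ∈ H) ∧ ∀ v : Fin (n - H.card), ∃! i : Fin n, π i = some v

/-- `s_n^k(p)`: the number of `p`-avoiding partial permutations of length `n`
with `k` holes. -/
noncomputable def snk (n k : ℕ) {ℓ : ℕ} (p : Fin ℓ → Fin ℓ) : ℕ :=
  Nat.card {π : Fin n → Option (Fin (n - k)) // IsPPerm k π ∧ PPAvoids π p}

/-- `s_n^H(p)`: the number of `p`-avoiding partial permutations of length `n`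
with hole set `H`. -/
noncomputable def snH {n ℓ : ℕ} (H : Finset (Fin n)) (p : Fin ℓ → Fin ℓ) : ℕ :=
  Nat.card {π : Fin n → Option (Fin (n - H.card)) // IsPPermH H π ∧ PPAvoids π p}

/-- The number of permutations of length `m` avoiding the pattern `p`. -/
noncomputable def avoidCount (m : ℕ) {ℓ : ℕ} (p : Fin ℓ → Fin ℓ) : ℕ :=
  Nat.card {σ : Equiv.Perm (Fin m) // ¬ ContainsPat (⇑σ) p}

/-- `p` is a Baxter permutation: no indices `a < b < c = b+1 < d` such that
`(p a, p b, p c, p d)` is order-isomorphic to `2413` or `3142`. -/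
def IsBaxter {ℓ : ℕ} (p : Fin ℓ → Fin ℓ) : Prop :=
  ¬ ∃ a b c d : Fin ℓ, a < b ∧ (b : ℕ) + 1 = (c : ℕ) ∧ c < d ∧
    ((p c < p a ∧ p a < p d ∧ p d < p b) ∨ (p b < p d ∧ p d < p a ∧ p a < p c))

/-!
An avoider `π` of `2413` with holes `i < j` is very rigid. Placing the two holes at suitable
values produces an extension of `π`, so a `2413` occurrence through a hole is forbidden for each
such placement. This forces the non-hole values on `[0, i)`, `(i, j)`, `(j, n)` to be
decreasing, increasing and decreasing, with the three blocks lying cyclically below one another.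
The cycle is impossible when all three intervals are nonempty; otherwise it is a linear order,
which determines `π`, and the partial permutation realising it does avoid `2413`. Hence
`s_n^{i,j}(2413)` is `1` or `0`, and `s_n^2(2413)` counts the pairs `i < j` with an empty
interval. The pattern `3142` is the complement of `2413`.
-/

theorem exists_perm_lt_iff_of_injective {n : ℕ} {α : Type*} [LinearOrder α] {f : Fin n → α}
    (hf : Function.Injective f) : ∃ σ : Equiv.Perm (Fin n), ∀ a b, σ a < σ b ↔ f a < f b := by
  classical
  let e := (univ.image f).orderIsoOfFin (by rw [card_image_of_injective _ hf, card_fin])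
  let τ : Fin n → Fin n := fun k => e.symm ⟨f k, mem_image_of_mem f (mem_univ k)⟩
  have hτ : Function.Injective τ := fun a b h => hf (congrArg Subtype.val (e.symm.injective h))
  exact ⟨Equiv.ofBijective τ (Finite.injective_iff_bijective.mp hτ),
    fun a b => e.symm.lt_iff_lt.trans Subtype.mk_lt_mk⟩

theorem ContainsPat.of_lt_iff_lt {n ℓ : ℕ} {α α' β : Type*} [LinearOrder α] [LinearOrder α']
    [LinearOrder β] {f : Fin n → α} {g : Fin n → α'} {p : Fin ℓ → β}
    (hfg : ∀ a b, f a < f b ↔ g a < g b) (hg : ContainsPat g p) : ContainsPat f p := by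
  obtain ⟨e, he, hep⟩ := hg
  exact ⟨e, he, fun a b => (hfg _ _).trans (hep a b)⟩

theorem PPAvoids.not_containsPat {n ℓ : ℕ} {α β γ : Type*} [LinearOrder α] [LinearOrder β]
    [LinearOrder γ] {π : Fin n → Option α} {p : Fin ℓ → β} (hav : PPAvoids π p)
    {f : Fin n → γ} (hf : Function.Injective f)
    (hπf : ∀ a b va vb, π a = some va → π b = some vb → (f a < f b ↔ va < vb)) :
    ¬ ContainsPat f p := by
  obtain ⟨σ, hσ⟩ := exists_perm_lt_iff_of_injective hf
  exact fun hp => hav σ (fun a b va vb ha hb => (hσ a b).trans (hπf a b va vb ha hb))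
    (hp.of_lt_iff_lt hσ)

theorem containsPat_2413_iff {n : ℕ} {α : Type*} [LinearOrder α] {f : Fin n → α} :
    ContainsPat f (![1, 3, 0, 2] : Fin 4 → Fin 4) ↔
      ∃ a b c d, a < b ∧ b < c ∧ c < d ∧ f c < f a ∧ f a < f d ∧ f d < f b := by
  constructor
  · rintro ⟨g, hg, hfg⟩
    exact ⟨g 0, g 1, g 2, g 3, hg (by decide), hg (by decide), hg (by decide),
      (hfg 2 0).2 (by decide), (hfg 0 3).2 (by decide), (hfg 3 1).2 (by decide)⟩
  · rintro ⟨a, b, c, d, hab, hbc, hcd, hca, had, hdb⟩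
    refine ⟨![a, b, c, d], fun x y hxy => ?_, fun x y => ?_⟩
    · fin_cases x <;> fin_cases y <;> simp at hxy ⊢ <;> order
    · fin_cases x <;> fin_cases y <;> simp <;> order

section PartialPerm

variable {n m : ℕ} {H : Finset (Fin n)} {π π' : Fin n → Option (Fin m)}

/-- `IsPPermH` with an arbitrary value type `Fin m`. -/
def IsPPermOn (H : Finset (Fin n)) (π : Fin n → Option (Fin m)) : Prop :=
  (∀ i, π i = none ↔ i ∈ H) ∧ ∀ v : Fin m, ∃! i : Fin n, π i = some v

theorem IsPPermOn.eq_of_eq_some (hπ : IsPPermOn H π) {a b : Fin n} {v : Fin m}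
    (ha : π a = some v) (hb : π b = some v) : a = b :=
  (hπ.2 v).unique ha hb

theorem IsPPermOn.not_mem_of_eq_some (hπ : IsPPermOn H π) {k : Fin n} {v : Fin m}
    (hk : π k = some v) : k ∉ H := fun hkH =>
  Option.some_ne_none v (hk.symm.trans ((hπ.1 k).mpr hkH))

theorem IsPPermOn.exists_eq_some (hπ : IsPPermOn H π) {k : Fin n} (hk : k ∉ H) :
    ∃ v, π k = some v :=
  Option.ne_none_iff_exists'.mp (mt (hπ.1 k).mp hk)

theorem IsPPermOn.card_filter_lt (hπ : IsPPermOn H π) (v : Fin m) :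
    #{b | ∃ w, π b = some w ∧ w < v} = v := by
  classical
  rw [← Fin.card_Iio v]
  symm
  refine card_bij (fun w _ => (hπ.2 w).exists.choose) (fun w hw => ?_) (fun w₁ _ w₂ _ h => ?_)
    (fun b hb => ?_)
  · exact mem_filter.mpr ⟨mem_univ _, w, (hπ.2 w).exists.choose_spec, mem_Iio.mp hw⟩
  · simpa [h, (hπ.2 w₂).exists.choose_spec] using ((hπ.2 w₁).exists.choose_spec).symm
  · obtain ⟨w, hbw, hwv⟩ := (mem_filter.mp hb).2
    exact ⟨w, mem_Iio.mpr hwv, (hπ.2 w).unique (hπ.2 w).exists.choose_spec hbw⟩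

theorem IsPPermOn.eq_of_lt_iff_lt (hπ : IsPPermOn H π) (hπ' : IsPPermOn H π')
    (h : ∀ a b va vb va' vb', π a = some va → π b = some vb → π' a = some va' →
      π' b = some vb' → (va < vb ↔ va' < vb')) : π = π' := by
  classical
  funext k
  by_cases hk : k ∈ H
  · rw [(hπ.1 k).mpr hk, (hπ'.1 k).mpr hk]
  obtain ⟨v, hv⟩ := hπ.exists_eq_some hk
  obtain ⟨v', hv'⟩ := hπ'.exists_eq_some hk
  rw [hv, hv', Option.some_inj, Fin.ext_iff, ← hπ.card_filter_lt, ← hπ'.card_filter_lt]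
  congr 1
  refine filter_congr fun b _ => ?_
  by_cases hb : b ∈ H
  · simp [(hπ.1 b).mpr hb, (hπ'.1 b).mpr hb]
  obtain ⟨w, hw⟩ := hπ.exists_eq_some hb
  obtain ⟨w', hw'⟩ := hπ'.exists_eq_some hb
  simp [hw, hw', h b k w v w' v' hw hv hw' hv']

end PartialPerm

section TwoHoles

variable {n m : ℕ} {i j : Fin n} {π : Fin n → Option (Fin m)}

/-- The order between the values at `a` and `b` that every avoider of `2413` with holes `i < j`
must have: `[0, i)` decreasing, `(i, j)` increasing, `(j, n)` decreasing, and the three blocks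
cyclically below one another. -/
def ForcedBelow (i j a b : Fin n) : Prop :=
  (a < i ∧ i < b ∧ b < j) ∨ (i < a ∧ a < j ∧ j < b) ∨ (j < a ∧ b < i) ∨
    (b < a ∧ a < i) ∨ (i < a ∧ a < b ∧ b < j) ∨ (j < b ∧ b < a)

theorem forcedBelow_or_forcedBelow
    (hgap : (i : ℕ) = 0 ∨ (j : ℕ) = i + 1 ∨ (j : ℕ) = n - 1) {a b : Fin n}
    (ha : a ∉ ({i, j} : Finset (Fin n))) (hb : b ∉ ({i, j} : Finset (Fin n))) (hab : a ≠ b) :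
    ForcedBelow i j a b ∨ ForcedBelow i j b a := by
  simp only [mem_insert, mem_singleton, not_or] at ha hb
  unfold ForcedBelow
  rcases hab.lt_or_gt with h | h <;> rcases Ne.lt_or_gt ha.1 with h₁ | h₁ <;>
    rcases Ne.lt_or_gt ha.2 with h₂ | h₂ <;> rcases Ne.lt_or_gt hb.1 with h₃ | h₃ <;>
    rcases Ne.lt_or_gt hb.2 with h₄ | h₄ <;> rcases hgap with h₅ | h₅ | h₅ <;> omega

/-- Non-hole values `v` are sent to `3 v + 2`, so that the holes can be put at any
`x, y ≢ 2 (mod 3)`: anywhere among the values, and in either order within one gap. -/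
def fillHoles (π : Fin n → Option (Fin m)) (i : Fin n) (x y : ℕ) (k : Fin n) : ℕ :=
  (π k).elim (if k = i then x else y) fun v => 3 * v + 2

theorem PPAvoids.not_2413_fillHoles (hav : PPAvoids π (![1, 3, 0, 2] : Fin 4 → Fin 4))
    (hπ : IsPPermOn {i, j} π) (x y : ℕ) (hxy : x ≠ y) (hx : x % 3 ≠ 2) (hy : y % 3 ≠ 2) :
    ¬ ∃ a b c d, a < b ∧ b < c ∧ c < d ∧ fillHoles π i x y c < fillHoles π i x y a ∧
      fillHoles π i x y a < fillHoles π i x y d ∧ fillHoles π i x y d < fillHoles π i x y b := by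
  refine containsPat_2413_iff.not.mp (hav.not_containsPat (fun a b hab => ?_) ?_)
  · unfold fillHoles at hab
    rcases ha : π a with _ | va <;> rcases hb : π b with _ | vb <;> rw [ha, hb] at hab
    · have ha' := (hπ.1 a).mp ha
      have hb' := (hπ.1 b).mp hb
      simp only [mem_insert, mem_singleton] at ha' hb'
      split_ifs at hab <;> grind
    · simp only [Option.elim] at hab; split_ifs at hab <;> omega
    · simp only [Option.elim] at hab; split_ifs at hab <;> omega
    · simp only [Option.elim] at hab
      exact hπ.eq_of_eq_some ha (by rw [hb, show vb = va by omega])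
  · intro a b va vb ha hb
    simp [fillHoles, ha, hb]

theorem PPAvoids.lt_of_forcedBelow (hav : PPAvoids π (![1, 3, 0, 2] : Fin 4 → Fin 4))
    (hπ : IsPPermOn {i, j} π) (hij : i < j) {a b : Fin n} (hab : ForcedBelow i j a b)
    {va vb : Fin m} (ha : π a = some va) (hb : π b = some vb) : va < vb := by
  have hi : π i = none := (hπ.1 i).mpr (by simp)
  have hj : π j = none := (hπ.1 j).mpr (by simp)
  have hfill : ∀ x y, fillHoles π i x y i = x ∧ fillHoles π i x y j = y ∧
      fillHoles π i x y a = 3 * va + 2 ∧ fillHoles π i x y b = 3 * vb + 2 := fun x y => by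
    simp [fillHoles, hi, hj, ha, hb, hij.ne']
  have hne : a ≠ b := by rintro rfl; unfold ForcedBelow at hab; omega
  by_contra hle
  have hlt : vb < va := lt_of_le_of_ne (not_lt.mp hle) fun h => hne (hπ.eq_of_eq_some ha (h ▸ hb))
  -- in each case the holes are placed so as to complete a `2413` occurrence with `a` and `b`
  rcases hab with h | h | h | h | h | h
  · have := hfill (3 * m + 3) (3 * va + 3)
    refine hav.not_2413_fillHoles hπ (3 * m + 3) (3 * va + 3) ?_ ?_ ?_ ⟨a, i, b, j, ?_⟩ <;> omega
  · have := hfill 1 0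
    refine hav.not_2413_fillHoles hπ 1 0 ?_ ?_ ?_ ⟨i, a, j, b, ?_⟩ <;> omega
  · have := hfill (3 * m + 3) 0
    refine hav.not_2413_fillHoles hπ (3 * m + 3) 0 ?_ ?_ ?_ ⟨b, i, j, a, ?_⟩ <;> omega
  · have := hfill 0 (3 * vb + 3)
    refine hav.not_2413_fillHoles hπ 0 (3 * vb + 3) ?_ ?_ ?_ ⟨b, a, i, j, ?_⟩ <;> omega
  · have := hfill (3 * vb + 3) (3 * vb + 4)
    refine hav.not_2413_fillHoles hπ (3 * vb + 3) (3 * vb + 4) ?_ ?_ ?_ ⟨i, a, b, j, ?_⟩ <;> omega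
  · have := hfill (3 * vb + 3) (3 * m + 3)
    refine hav.not_2413_fillHoles hπ (3 * vb + 3) (3 * m + 3) ?_ ?_ ?_ ⟨i, j, b, a, ?_⟩ <;> omega

theorem PPAvoids.lt_iff_forcedBelow (hav : PPAvoids π (![1, 3, 0, 2] : Fin 4 → Fin 4))
    (hπ : IsPPermOn {i, j} π) (hij : i < j)
    (hgap : (i : ℕ) = 0 ∨ (j : ℕ) = i + 1 ∨ (j : ℕ) = n - 1) {a b : Fin n} {va vb : Fin m}
    (ha : π a = some va) (hb : π b = some vb) : va < vb ↔ ForcedBelow i j a b := by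
  refine ⟨fun hlt => ?_, fun h => hav.lt_of_forcedBelow hπ hij h ha hb⟩
  have hab : a ≠ b := by rintro rfl; rw [ha, Option.some_inj] at hb; exact hlt.ne hb
  refine (forcedBelow_or_forcedBelow hgap (hπ.not_mem_of_eq_some ha)
    (hπ.not_mem_of_eq_some hb) hab).resolve_right fun h => ?_
  exact lt_asymm hlt (hav.lt_of_forcedBelow hπ hij h hb ha)

theorem PPAvoids.one_interval_empty (hav : PPAvoids π (![1, 3, 0, 2] : Fin 4 → Fin 4))
    (hπ : IsPPermOn {i, j} π) (hij : i < j) :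
    (i : ℕ) = 0 ∨ (j : ℕ) = i + 1 ∨ (j : ℕ) = n - 1 := by
  by_contra! h
  have hj := j.isLt
  let a : Fin n := ⟨0, by omega⟩
  let e : Fin n := ⟨i + 1, by omega⟩
  let b : Fin n := ⟨j + 1, by omega⟩
  have hnot : ∀ k : Fin n, (k : ℕ) ≠ i → (k : ℕ) ≠ j → k ∉ ({i, j} : Finset (Fin n)) := by
    intro k hki hkj; simp only [mem_insert, mem_singleton, not_or]; omega
  obtain ⟨va, ha⟩ := hπ.exists_eq_some (hnot a (by simp [a]; omega) (by simp [a]; omega))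
  obtain ⟨ve, he⟩ := hπ.exists_eq_some (hnot e (by simp [e]) (by simp [e]; omega))
  obtain ⟨vb, hb⟩ := hπ.exists_eq_some (hnot b (by simp [b]; omega) (by simp [b]))
  have hae : ForcedBelow i j a e := by simp only [ForcedBelow, Fin.lt_def, a, e]; omega
  have heb : ForcedBelow i j e b := by simp only [ForcedBelow, Fin.lt_def, e, b]; omega
  have hba : ForcedBelow i j b a := by simp only [ForcedBelow, Fin.lt_def, a, b]; omega
  exact lt_asymm ((hav.lt_of_forcedBelow hπ hij hae ha he).trans
    (hav.lt_of_forcedBelow hπ hij heb he hb)) (hav.lt_of_forcedBelow hπ hij hba hb ha)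

theorem eq_of_avoids_2413 {π' : Fin n → Option (Fin m)} (hij : i < j)
    (hgap : (i : ℕ) = 0 ∨ (j : ℕ) = i + 1 ∨ (j : ℕ) = n - 1)
    (hπ : IsPPermOn {i, j} π) (hπ' : IsPPermOn {i, j} π')
    (hav : PPAvoids π (![1, 3, 0, 2] : Fin 4 → Fin 4))
    (hav' : PPAvoids π' (![1, 3, 0, 2] : Fin 4 → Fin 4)) : π = π' :=
  hπ.eq_of_lt_iff_lt hπ' fun _ _ _ _ _ _ ha hb ha' hb' =>
    (hav.lt_iff_forcedBelow hπ hij hgap ha hb).trans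
      (hav'.lt_iff_forcedBelow hπ' hij hgap ha' hb').symm

theorem avoids_2413_of_forcedBelow (hnone : ∀ k, π k = none ↔ k ∈ ({i, j} : Finset (Fin n)))
    (hgap : (i : ℕ) = 0 ∨ (j : ℕ) = i + 1 ∨ (j : ℕ) = n - 1)
    (hπ : ∀ a b va vb, π a = some va → π b = some vb → va < vb → ForcedBelow i j a b) :
    PPAvoids π (![1, 3, 0, 2] : Fin 4 → Fin 4) := by
  intro σ hσ hpat
  obtain ⟨q₀, q₁, q₂, q₃, h₀₁, h₁₂, h₂₃, h₂₀, h₀₃, h₃₁⟩ := containsPat_2413_iff.mp hpat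
  have key : ∀ a b, σ a < σ b → a = i ∨ a = j ∨ b = i ∨ b = j ∨ ForcedBelow i j a b := by
    intro a b hab
    by_cases ha : a ∈ ({i, j} : Finset (Fin n))
    · simp only [mem_insert, mem_singleton] at ha; tauto
    by_cases hb : b ∈ ({i, j} : Finset (Fin n))
    · simp only [mem_insert, mem_singleton] at hb; tauto
    obtain ⟨va, hva⟩ := Option.ne_none_iff_exists'.mp (mt (hnone a).mp ha)
    obtain ⟨vb, hvb⟩ := Option.ne_none_iff_exists'.mp (mt (hnone b).mp hb)
    exact .inr <| .inr <| .inr <| .inr <| hπ a b va vb hva hvb ((hσ a b va vb hva hvb).mp hab)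
  have f₂₀ := key _ _ h₂₀
  have f₀₃ := key _ _ h₀₃
  have f₃₁ := key _ _ h₃₁
  have f₂₃ := key _ _ (h₂₀.trans h₀₃)
  have f₀₁ := key _ _ (h₀₃.trans h₃₁)
  have f₂₁ := key _ _ (h₂₀.trans (h₀₃.trans h₃₁))
  unfold ForcedBelow at *
  rcases hgap with h | h | h <;> omega

/-- Each of the blocks `[0, i)`, `(i, j)`, `(j, n)` is put right above the block cyclically
before it; when one of the blocks is empty, they tile `[0, n - 2)`. -/
def canonicalValue (i j k : Fin n) : ℕ :=
  if k < i then (n - 1 - j) + (i - 1 - k) else if k < j then k - 1 else (j - i - 1) + (n - 1 - k)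

theorem canonicalValue_lt (hij : i < j) {k : Fin n} (hk : k ∉ ({i, j} : Finset (Fin n))) :
    canonicalValue i j k < n - 2 := by
  simp only [mem_insert, mem_singleton, not_or] at hk
  unfold canonicalValue
  split_ifs <;> omega

theorem canonicalValue_lt_of_forcedBelow
    (hgap : (i : ℕ) = 0 ∨ (j : ℕ) = i + 1 ∨ (j : ℕ) = n - 1) {a b : Fin n}
    (ha : a ∉ ({i, j} : Finset (Fin n))) (hb : b ∉ ({i, j} : Finset (Fin n)))
    (hab : ForcedBelow i j a b) : canonicalValue i j a < canonicalValue i j b := by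
  simp only [mem_insert, mem_singleton, not_or] at ha hb
  unfold canonicalValue
  rcases hab with h | h | h | h | h | h <;> split_ifs <;> omega

theorem exists_isPPermOn_avoids_2413 (hm : m + 2 = n) (hij : i < j)
    (hgap : (i : ℕ) = 0 ∨ (j : ℕ) = i + 1 ∨ (j : ℕ) = n - 1) :
    ∃ π : Fin n → Option (Fin m), IsPPermOn {i, j} π ∧
      PPAvoids π (![1, 3, 0, 2] : Fin 4 → Fin 4) := by
  classical
  let π : Fin n → Option (Fin m) := fun k => if hk : k ∈ ({i, j} : Finset (Fin n)) then none
    else some ⟨canonicalValue i j k, hm ▸ canonicalValue_lt hij hk⟩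
  have hnone : ∀ k, π k = none ↔ k ∈ ({i, j} : Finset (Fin n)) := fun k => by
    simp only [π]
    split_ifs with hk
    · exact iff_of_true rfl hk
    · exact iff_of_false not_false hk
  have hsome : ∀ k v, π k = some v ↔ k ∉ ({i, j} : Finset (Fin n)) ∧ canonicalValue i j k = v :=
    fun k v => by
    simp only [π]
    split_ifs with hk
    · exact iff_of_false not_false fun h => h.1 hk
    · rw [Option.some_inj, Fin.ext_iff]
      exact ⟨fun h => ⟨hk, h⟩, And.right⟩
  have hlt : ∀ a b, a ∉ ({i, j} : Finset (Fin n)) → b ∉ ({i, j} : Finset (Fin n)) →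
      canonicalValue i j a < canonicalValue i j b → ForcedBelow i j a b := by
    intro a b ha hb hab
    refine (forcedBelow_or_forcedBelow hgap ha hb (by rintro rfl; omega)).resolve_right
      fun h => ?_
    exact lt_asymm hab (canonicalValue_lt_of_forcedBelow hgap hb ha h)
  have hinj : Set.InjOn (canonicalValue i j) ↑({i, j} : Finset (Fin n))ᶜ := by
    intro a ha b hb hab
    by_contra hne
    rw [coe_compl, Set.mem_compl_iff, mem_coe] at ha hb
    rcases forcedBelow_or_forcedBelow hgap ha hb hne with h | h
    · exact (canonicalValue_lt_of_forcedBelow hgap ha hb h).ne hab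
    · exact (canonicalValue_lt_of_forcedBelow hgap hb ha h).ne hab.symm
  have hsurj := surjOn_of_injOn_of_card_le (t := range m) (canonicalValue i j)
    (fun k hk => mem_range.mpr (hm ▸ canonicalValue_lt hij (mem_compl.mp hk))) hinj
    (by rw [card_range, card_compl, card_pair hij.ne, Fintype.card_fin]; omega)
  refine ⟨π, ⟨hnone, fun v => ?_⟩, avoids_2413_of_forcedBelow hnone hgap fun a b va vb ha hb => ?_⟩
  · obtain ⟨k, hk, hkv⟩ := hsurj (mem_range.mpr v.isLt)
    refine ⟨k, (hsome k v).mpr ⟨mem_compl.mp hk, hkv⟩, fun k' hk' => ?_⟩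
    obtain ⟨hk'₁, hk'₂⟩ := (hsome k' v).mp hk'
    exact hinj (mem_coe.mpr (mem_compl.mpr hk'₁)) hk (hk'₂.trans hkv.symm)
  · rw [hsome] at ha hb
    rw [Fin.lt_def, ← ha.2, ← hb.2]
    exact hlt a b ha.1 hb.1

theorem snH_pair_2413 (hij : i < j) :
    snH ({i, j} : Finset (Fin n)) (![1, 3, 0, 2] : Fin 4 → Fin 4) =
      if (i : ℕ) = 0 ∨ (j : ℕ) = i + 1 ∨ (j : ℕ) = n - 1 then 1 else 0 := by
  split_ifs with hgap
  · have hm : n - #{i, j} + 2 = n := by have := j.isLt; rw [card_pair hij.ne]; omega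
    obtain ⟨π, hπ, hav⟩ := exists_isPPermOn_avoids_2413 hm hij hgap
    exact Nat.card_eq_one_iff_unique.mpr ⟨⟨fun π₁ π₂ => Subtype.ext <|
      eq_of_avoids_2413 hij hgap π₁.2.1 π₂.2.1 π₁.2.2 π₂.2.2⟩, ⟨⟨π, hπ, hav⟩⟩⟩
  · have : IsEmpty {π : Fin n → Option (Fin (n - #{i, j})) // IsPPermH {i, j} π ∧
        PPAvoids π (![1, 3, 0, 2] : Fin 4 → Fin 4)} :=
      ⟨fun π => hgap (π.2.2.one_interval_empty π.2.1 hij)⟩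
    exact Nat.card_of_isEmpty

end TwoHoles

theorem snk_eq_sum_snH (n k : ℕ) {ℓ : ℕ} (p : Fin ℓ → Fin ℓ) :
    snk n k p = ∑ H ∈ powersetCard k (univ : Finset (Fin n)), snH H p := by
  classical
  let holes : (Fin n → Option (Fin (n - k))) → Finset (Fin n) := fun π => {i | π i = none}
  rw [snk, Nat.card_eq_fintype_card, Fintype.card_subtype,
    card_eq_sum_card_fiberwise (f := holes) (t := powersetCard k univ)
      fun π hπ => mem_powersetCard.mpr ⟨subset_univ _, (mem_filter.mp hπ).2.1.1⟩]
  refine sum_congr rfl fun H hH => ?_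
  obtain rfl := (mem_powersetCard.mp hH).2
  rw [snH, Nat.card_eq_fintype_card, Fintype.card_subtype, filter_filter]
  refine congrArg card (filter_congr fun π _ => ?_)
  have hholes : holes π = H ↔ ∀ i, π i = none ↔ i ∈ H := by simp [holes, Finset.ext_iff]
  rw [hholes, IsPPerm, IsPPermH]
  constructor
  · rintro ⟨⟨⟨-, hvals⟩, hav⟩, hH⟩
    exact ⟨⟨hH, hvals⟩, hav⟩
  · rintro ⟨⟨hH, hvals⟩, hav⟩
    exact ⟨⟨⟨congrArg card (hholes.mpr hH), hvals⟩, hav⟩, hH⟩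

theorem sum_powersetCard_two_eq_sum_lt {α M : Type*} [LinearOrder α] [Fintype α]
    [AddCommMonoid M] (f : Finset α → M) :
    ∑ H ∈ powersetCard 2 univ, f H =
      ∑ q ∈ univ.filter (fun q : α × α => q.1 < q.2), f {q.1, q.2} := by
  symm
  refine sum_bij (fun q _ => {q.1, q.2}) (fun q hq => ?_) (fun q hq q' hq' h => ?_) (fun H hH => ?_)
    fun _ _ => rfl
  · exact mem_powersetCard.mpr ⟨subset_univ _, card_pair (mem_filter.mp hq).2.ne⟩
  · have h₁ := (mem_filter.mp hq).2
    have h₂ := (mem_filter.mp hq').2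
    have ha : q.1 ∈ ({q'.1, q'.2} : Finset α) := h ▸ mem_insert_self _ _
    have hb : q.2 ∈ ({q'.1, q'.2} : Finset α) := h ▸ mem_insert_of_mem (mem_singleton_self _)
    have ha' : q'.1 ∈ ({q.1, q.2} : Finset α) := h.symm ▸ mem_insert_self _ _
    simp only [mem_insert, mem_singleton] at ha hb ha'
    ext <;> rcases ha with ha | ha <;> rcases hb with hb | hb <;> rcases ha' with ha' | ha' <;>
      order
  · obtain ⟨x, y, hxy, rfl⟩ := card_eq_two.mp (mem_powersetCard.mp hH).2
    rcases hxy.lt_or_gt with h | h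
    · exact ⟨(x, y), mem_filter.mpr ⟨mem_univ _, h⟩, rfl⟩
    · exact ⟨(y, x), mem_filter.mpr ⟨mem_univ _, h⟩, pair_comm y x⟩

theorem card_pairs_with_empty_interval {n : ℕ} (hn : 3 ≤ n) :
    #{q : Fin n × Fin n | q.1 < q.2 ∧ ((q.1 : ℕ) = 0 ∨ (q.2 : ℕ) = q.1 + 1 ∨ (q.2 : ℕ) = n - 1)} =
      3 * n - 6 := by
  rw [← card_range (3 * n - 6)]
  -- list `(0, j)`, then `(i, i + 1)` with `i ≥ 1`, then `(i, n - 1)` with `1 ≤ i ≤ n - 3`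
  refine card_bij (fun q _ => if (q.1 : ℕ) = 0 then q.2 - 1
      else if (q.2 : ℕ) = q.1 + 1 then n - 2 + q.1 else 2 * n - 4 + q.1)
    (fun q hq => ?_) (fun q hq q' hq' h => ?_) (fun c hc => ?_)
  · have := (mem_filter.mp hq).2
    have := q.2.isLt
    rw [mem_range]
    split_ifs <;> omega
  · have := (mem_filter.mp hq).2
    have := (mem_filter.mp hq').2
    have := q.2.isLt
    have := q'.2.isLt
    ext <;> split_ifs at h <;> omega
  · have := mem_range.mp hc
    by_cases h₁ : c < n - 1
    · exact ⟨(⟨0, by omega⟩, ⟨c + 1, by omega⟩), by simp, by simp⟩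
    by_cases h₂ : c < 2 * n - 3
    · refine ⟨(⟨c + 2 - n, by omega⟩, ⟨c + 3 - n, by omega⟩), by simp; omega, ?_⟩
      simp only
      split_ifs <;> omega
    · refine ⟨(⟨c + 4 - 2 * n, by omega⟩, ⟨n - 1, by omega⟩), by simp; omega, ?_⟩
      simp only
      split_ifs <;> omega

theorem snk_two_2413 {n : ℕ} (hn : 3 ≤ n) :
    snk n 2 (![1, 3, 0, 2] : Fin 4 → Fin 4) = 3 * n - 6 := by
  rw [snk_eq_sum_snH, sum_powersetCard_two_eq_sum_lt, ← card_pairs_with_empty_interval hn,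
    ← filter_filter, card_filter]
  exact sum_congr rfl fun q hq => snH_pair_2413 (mem_filter.mp hq).2

theorem PPAvoids.map_rev {n m ℓ : ℕ} {β γ : Type*} [LinearOrder β] [LinearOrder γ]
    {π : Fin n → Option (Fin m)} {p : Fin ℓ → β} {q : Fin ℓ → γ}
    (hpq : ∀ a b, p a < p b ↔ q b < q a) (hav : PPAvoids π p) :
    PPAvoids (fun k => (π k).map Fin.rev) q := by
  rintro σ hσ ⟨g, hg, hgq⟩
  refine hav (σ.trans Fin.revPerm) (fun a b va vb ha hb => ?_) ⟨g, hg, fun a b => ?_⟩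
  · have := hσ b a vb.rev va.rev (by simp [hb]) (by simp [ha])
    simpa [Fin.rev_lt_rev] using this
  · simpa [Fin.rev_lt_rev, hpq] using hgq b a

theorem IsPPerm.map_rev {n k : ℕ} {π : Fin n → Option (Fin (n - k))} (hπ : IsPPerm k π) :
    IsPPerm k (fun i => (π i).map Fin.rev) := by
  refine ⟨by simpa using hπ.1, fun v => ?_⟩
  have hrev : ∀ i, (π i).map Fin.rev = some v ↔ π i = some v.rev := fun i => by
    cases π i <;> simp [Fin.rev_eq_iff]
  simpa only [hrev] using hπ.2 v.rev

theorem snk_eq_of_lt_iff_gt {n k ℓ : ℕ} {p q : Fin ℓ → Fin ℓ}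
    (hpq : ∀ a b, p a < p b ↔ q b < q a) : snk n k p = snk n k q := by
  refine Nat.card_congr
    { toFun := fun π => ⟨_, π.2.1.map_rev, π.2.2.map_rev hpq⟩
      invFun := fun π => ⟨_, π.2.1.map_rev, π.2.2.map_rev fun a b => (hpq b a).symm⟩
      left_inv := fun π => ?_
      right_inv := fun π => ?_ } <;>
  ext1 <;> simp [Option.map_map, Function.comp_def]

/-- For `n ≥ 3`: `s_n^2(2413) = s_n^2(3142) = 3n - 6`; and for a hole set
`H = {i, j}` with `i < j`, `s_n^H(2413) = 1` if one of the three intervals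
determined by the holes is empty, and `0` otherwise. -/
theorem count_2413_two_holes (n : ℕ) (hn : 3 ≤ n) :
    snk n 2 (![1, 3, 0, 2] : Fin 4 → Fin 4) = 3 * n - 6 ∧
    snk n 2 (![2, 0, 3, 1] : Fin 4 → Fin 4) = 3 * n - 6 ∧
    (∀ i j : Fin n, i < j →
      snH ({i, j} : Finset (Fin n)) (![1, 3, 0, 2] : Fin 4 → Fin 4) =
        if (i : ℕ) = 0 ∨ (j : ℕ) = (i : ℕ) + 1 ∨ (j : ℕ) = n - 1 then 1 else 0) :=
  ⟨snk_two_2413 hn, (snk_eq_of_lt_iff_gt (by decide)).trans (snk_two_2413 hn),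
    fun _ _ hij => snH_pair_2413 hij⟩
end

section
/- For every pattern p of length 4 other than 2413 and 3142 (i.e., every Baxter permutation of length 4), s_n^2(p) = binomial(n,2) for all n ≥ 2. -/
open Finset

/-!
Fix the two holes `h₁ < h₂`; they cut the other positions into three regions. For filled positions
`i < j` in regions `r ≤ s`, sorting `i, j, h₁, h₂` puts `i` at index `r` and `j` at index `s + 1`.
The holes can take any values, so an avoider must order its entries at `i` and `j` opposite to
`p r` and `p (s + 1)`. This forces the relative order of all entries, hence at most one avoider
per pair of holes. Conversely, the forced relations are consistent unless the order they induce on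
the three regions is cyclic, which happens exactly for `2413` and `3142`, and a finite check shows
that the partial permutation they define avoids `p`.
-/

open Function

theorem exists_equiv_fin_lt_iff {ι α : Type*} [Fintype ι] [LinearOrder α] {m : ℕ}
    (hm : Fintype.card ι = m) {κ : ι → α} (hκ : Injective κ) :
    ∃ e : ι ≃ Fin m, ∀ i j, e i < e j ↔ κ i < κ j :=
  let o := Fintype.orderIsoFinOfCardEq (Set.range κ) ((Set.card_range_of_injective hκ).trans hm)
  ⟨(Equiv.ofInjective κ hκ).trans o.symm.toEquiv, fun _ _ => o.symm.lt_iff_lt⟩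

section PartialPermutation

variable {ι : Type*} [Fintype ι] {m : ℕ}

theorem val_eq_card_filter {π : ι → Option (Fin m)} (hπ : ∀ v, ∃! x, π x = some v)
    (v : Fin m) : (v : ℕ) = #{x | ∃ w < v, π x = some w} := by
  classical
  choose pos hpos huniq using hπ
  have : ({x | ∃ w < v, π x = some w} : Finset ι) = (Iio v).image pos := by
    ext x
    simp only [mem_filter, mem_univ, true_and, mem_image, mem_Iio]
    constructor
    · rintro ⟨w, hw, hx⟩
      exact ⟨w, hw, (huniq w x hx).symm⟩
    · rintro ⟨w, hw, rfl⟩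
      exact ⟨w, hw, hpos w⟩
  rw [this, card_image_of_injective _ fun v w h =>
    Option.some_inj.mp <| (hpos v).symm.trans <| by rw [h]; exact hpos w, Fin.card_Iio]

theorem eq_of_none_iff_of_lt_iff {π π' : ι → Option (Fin m)}
    (hπ : ∀ v, ∃! x, π x = some v) (hπ' : ∀ v, ∃! x, π' x = some v)
    (hnone : ∀ x, π x = none ↔ π' x = none)
    (hlt : ∀ x y v w v' w', π x = some v → π y = some w → π' x = some v' → π' y = some w' →
      (v < w ↔ v' < w')) : π = π' := by
  have visible : ∀ x v, π x = some v → ∃ v', π' x = some v' := fun x v hx =>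
    Option.ne_none_iff_exists'.1 fun h => by simp [(hnone x).2 h] at hx
  funext x
  cases hx : π x with
  | none => exact ((hnone x).1 hx).symm
  | some v =>
    obtain ⟨v', hx'⟩ := visible x v hx
    rw [hx', Option.some_inj, Fin.ext_iff, val_eq_card_filter hπ, val_eq_card_filter hπ']
    congr 1
    ext y
    simp only [mem_filter, mem_univ, true_and]
    cases hy : π y with
    | none => simp [(hnone y).1 hy]
    | some w =>
      obtain ⟨w', hy'⟩ := visible y w hy
      simp [hy', hlt y x w v w' v' hy hx hy' hx']

end PartialPermutation

theorem exists_strictMono_map_eq_map_eq {𝕜 : Type*} [Field 𝕜] [LinearOrder 𝕜]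
    [IsStrictOrderedRing 𝕜] {x₁ x₂ y₁ y₂ : 𝕜} (hx : x₁ ≠ x₂) (hy : y₁ ≠ y₂)
    (h : x₁ < x₂ ↔ y₁ < y₂) : ∃ f : 𝕜 → 𝕜, StrictMono f ∧ f x₁ = y₁ ∧ f x₂ = y₂ := by
  have hslope : 0 < (y₂ - y₁) / (x₂ - x₁) := by
    rcases hx.lt_or_gt with hlt | hlt
    · exact div_pos (sub_pos.2 (h.1 hlt)) (sub_pos.2 hlt)
    · exact div_pos_of_neg_of_neg (sub_neg.2 ((hy.lt_or_gt.resolve_left (mt h.2 hlt.not_gt))))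
        (sub_neg.2 hlt)
  refine ⟨fun x => y₁ + (y₂ - y₁) / (x₂ - x₁) * (x - x₁), fun a b hab => ?_, by simp, ?_⟩
  · simpa using mul_lt_mul_of_pos_left (sub_lt_sub_right hab x₁) hslope
  · field_simp [sub_ne_zero.2 hx.symm]
    ring

theorem not_ppAvoids_of_interpolation {n m ℓ : ℕ} {β : Type*} [LinearOrder β]
    {π : Fin n → Option (Fin m)} {p : Fin ℓ → β} (hp : Injective p)
    (hπ : ∀ x y v, π x = some v → π y = some v → x = y)
    {g : Fin ℓ → Fin n} (hg : StrictMono g) (hholes : ∀ x, π x = none → x ∈ Set.range g)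
    (φ : Fin ℓ → ℚ) (hφ : ∀ a b, φ a < φ b ↔ p a < p b)
    (hφπ : ∀ t v, π (g t) = some v → φ t = (v : ℕ)) : ¬ PPAvoids π p := by
  classical
  have hφinj : Injective φ := fun a b hab =>
    hp <| le_antisymm (not_lt.1 <| (hφ b a).not.1 hab.le.not_gt)
      (not_lt.1 <| (hφ a b).not.1 hab.ge.not_gt)
  -- a filled position keeps its value, a hole `g t` gets `φ t`; the flag separates the two kinds
  let κ : Fin n → ℚ ×ₗ Bool := fun x =>
    toLex ((π x).elim ((partialInv g x).elim 0 φ) fun v => ((v : ℕ) : ℚ), (π x).isNone)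
  have hκg : ∀ t, κ (g t) = toLex (φ t, (π (g t)).isNone) := by
    intro t
    cases ht : π (g t) with
    | none => simp [κ, ht, partialInv_left hg.injective]
    | some v => simp [κ, ht, hφπ t v ht]
  have hκ : Injective κ := by
    intro x y hxy
    simp only [κ, toLex_inj, Prod.mk.injEq] at hxy
    cases hx : π x with
    | none =>
      cases hy : π y with
      | none =>
        obtain ⟨a, rfl⟩ := hholes x hx
        obtain ⟨b, rfl⟩ := hholes y hy
        simp only [hx, hy, Option.elim_none, partialInv_left hg.injective] at hxy
        rw [hφinj hxy.1]
      | some w => simp [hx, hy] at hxy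
    | some v =>
      cases hy : π y with
      | none => simp [hx, hy] at hxy
      | some w =>
        simp only [hx, hy, Option.elim_some, Nat.cast_inj, Fin.val_inj] at hxy
        exact hπ x y v hx (hxy.1 ▸ hy)
  obtain ⟨σ, hσ⟩ := exists_equiv_fin_lt_iff (Fintype.card_fin n) hκ
  refine fun hav => hav σ (fun x y v w hx hy => ?_) ⟨g, hg, fun a b => ?_⟩
  · simp [hσ, κ, hx, hy, Prod.Lex.toLex_lt_toLex]
  · rw [hσ, hκg, hκg, Prod.Lex.toLex_lt_toLex, ← hφ]
    refine or_iff_left fun h => (h.2.ne ?_)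
    rw [hφinj h.1]

theorem card_filter_lt_orderEmbOfFin {α : Type*} [LinearOrder α] (s : Finset α) {k : ℕ}
    (h : s.card = k) (t : Fin k) : #{y ∈ s | y < s.orderEmbOfFin h t} = t := by
  have : {y ∈ s | y < s.orderEmbOfFin h t} = (Iio t).map (s.orderEmbOfFin h).toEmbedding := by
    ext y
    simp only [mem_filter, mem_map, mem_Iio, RelEmbedding.coe_toEmbedding]
    constructor
    · rintro ⟨hy, hlt⟩
      obtain ⟨u, rfl⟩ : y ∈ Set.range (s.orderEmbOfFin h) := by rwa [range_orderEmbOfFin]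
      exact ⟨u, (s.orderEmbOfFin h).lt_iff_lt.1 hlt, rfl⟩
    · rintro ⟨u, hu, rfl⟩
      exact ⟨orderEmbOfFin_mem s h u, (s.orderEmbOfFin h).lt_iff_lt.2 hu⟩
  rw [this, card_map, Fin.card_Iio]

section TwoHoles

variable {n : ℕ}

def region (h₁ h₂ x : Fin n) : Fin 3 := if x < h₁ then 0 else if x < h₂ then 1 else 2

def ForcedOrder {α : Type*} [LinearOrder α] (h₁ h₂ : Fin n) (p : Fin 4 → Fin 4)
    (π : Fin n → Option α) : Prop :=
  ∀ i j v w, i < j → π i = some v → π j = some w →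
    (v < w ↔ p (region h₁ h₂ j).succ < p (region h₁ h₂ i).castSucc)

variable {h₁ h₂ : Fin n}

theorem region_mono {x y : Fin n} (hxy : x ≤ y) : region h₁ h₂ x ≤ region h₁ h₂ y := by
  unfold region
  split_ifs <;> first | decide | (exfalso; simp only [Fin.lt_def, Fin.le_def] at *; omega)

theorem card_filter_lt_eq_region (hh : h₁ < h₂) {x : Fin n} (hx₁ : x ≠ h₁) (hx₂ : x ≠ h₂) :
    #{y ∈ {h₁, h₂} | y < x} = (region h₁ h₂ x : ℕ) := by
  simp only [region, filter_insert, filter_singleton]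
  rcases hx₁.lt_or_gt with h₁x | h₁x
  · simp [h₁x, h₁x.not_gt, (h₁x.trans hh).not_gt]
  rcases hx₂.lt_or_gt with h₂x | h₂x
  · simp [h₁x, h₁x.not_gt, h₂x, h₂x.not_gt]
  · simp [h₁x.not_gt, h₂x.not_gt, h₁x, h₂x, hh.ne]

theorem exists_strictMono_sorted_quadruple (hh : h₁ < h₂) {i j : Fin n} (hij : i < j)
    (hi₁ : i ≠ h₁) (hi₂ : i ≠ h₂) (hj₁ : j ≠ h₁) (hj₂ : j ≠ h₂) :
    ∃ g : Fin 4 → Fin n, StrictMono g ∧ g (region h₁ h₂ i).castSucc = i ∧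
      g (region h₁ h₂ j).succ = j ∧ ∀ x, x ∈ Set.range g ↔ x = i ∨ x = j ∨ x = h₁ ∨ x = h₂ := by
  set S : Finset (Fin n) := {i, j, h₁, h₂}
  have hS : S.card = 4 := by
    simp [S, card_insert_of_notMem, hij.ne, hi₁, hi₂, hj₁, hj₂, hh.ne]
  set g := S.orderEmbOfFin hS
  have index : ∀ x ∈ S, ∀ t : Fin 4, #{y ∈ S | y < x} = t → g t = x := by
    intro x hx t ht
    obtain ⟨u, rfl⟩ : x ∈ Set.range g := by rw [range_orderEmbOfFin]; exact hx
    rw [card_filter_lt_orderEmbOfFin, Fin.val_inj] at ht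
    rw [ht]
  refine ⟨g, g.strictMono, index i (by simp [S]) _ ?_, index j (by simp [S]) _ ?_, fun x => ?_⟩
  · rw [filter_insert, filter_insert, if_neg (lt_irrefl i), if_neg hij.not_gt,
      card_filter_lt_eq_region hh hi₁ hi₂, Fin.val_castSucc]
  · rw [filter_insert, filter_insert, if_pos hij, if_neg (lt_irrefl j),
      card_insert_of_notMem (by simp [hi₁, hi₂]), card_filter_lt_eq_region hh hj₁ hj₂, Fin.val_succ]
  · rw [range_orderEmbOfFin]
    simp [S]

theorem ForcedOrder.of_ppAvoids {m : ℕ} {p : Fin 4 → Fin 4} (hp : Injective p) (hh : h₁ < h₂)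
    {π : Fin n → Option (Fin m)} (hnone : ∀ x, π x = none ↔ x = h₁ ∨ x = h₂)
    (hπ : ∀ x y v, π x = some v → π y = some v → x = y) (hav : PPAvoids π p) :
    ForcedOrder h₁ h₂ p π := by
  intro i j v w hij hv hw
  have visible : ∀ {x u}, π x = some u → x ≠ h₁ ∧ x ≠ h₂ := fun hx => by
    simpa [not_or] using (hnone _).not.1 (by simp [hx])
  obtain ⟨hi₁, hi₂⟩ := visible hv
  obtain ⟨hj₁, hj₂⟩ := visible hw
  obtain ⟨g, hg, hgi, hgj, hrange⟩ := exists_strictMono_sorted_quadruple hh hij hi₁ hi₂ hj₁ hj₂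
  set a := (region h₁ h₂ i).castSucc
  set b := (region h₁ h₂ j).succ
  have hab : p a ≠ p b := hp.ne (Fin.castSucc_lt_succ_iff.2 (region_mono hij.le)).ne
  have hvw : v ≠ w := fun h => hij.ne (hπ i j v hv (h ▸ hw))
  by_contra hforced
  have hagree : p a < p b ↔ v < w := by
    rcases hvw.lt_or_gt with h | h <;> rcases hab.lt_or_gt with h' | h' <;>
      simp [h, h', h.not_gt, h'.not_gt] at hforced ⊢
  obtain ⟨f, hf, hfa, hfb⟩ := exists_strictMono_map_eq_map_eq (𝕜 := ℚ) (x₁ := (p a : ℕ))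
    (x₂ := (p b : ℕ)) (y₁ := (v : ℕ)) (y₂ := (w : ℕ))
    (Nat.cast_injective.ne (Fin.val_injective.ne hab))
    (Nat.cast_injective.ne (Fin.val_injective.ne hvw)) (by exact_mod_cast hagree)
  have hfp : ∀ t u, f (p t : ℕ) < f (p u : ℕ) ↔ p t < p u := fun t u =>
    hf.lt_iff_lt.trans (by exact_mod_cast Iff.rfl)
  refine hav |> not_ppAvoids_of_interpolation hp hπ hg (fun x hx => (hrange x).2 ?_)
    (fun t => f (p t : ℕ)) hfp fun t u htu => ?_
  · exact Or.inr (Or.inr ((hnone x).1 hx))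
  · rcases (hrange (g t)).1 ⟨t, rfl⟩ with h | h | h | h
    · obtain rfl := hg.injective (h.trans hgi.symm)
      rw [hgi, hv, Option.some_inj] at htu
      rw [← htu, hfa]
    · obtain rfl := hg.injective (h.trans hgj.symm)
      rw [hgj, hw, Option.some_inj] at htu
      rw [← htu, hfb]
    · cases htu.symm.trans ((hnone _).2 (Or.inl h))
    · cases htu.symm.trans ((hnone _).2 (Or.inr h))

def slot (h₁ h₂ x : Fin n) : Fin 5 :=
  if x = h₁ then 1 else if x = h₂ then 3 else ![0, 2, 4] (region h₁ h₂ x)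

def slotRegion : Fin 5 → Option (Fin 3) := ![some 0, none, some 1, none, some 2]

theorem slot_mono (hh : h₁ < h₂) : Monotone (slot h₁ h₂) := by
  intro x y hxy
  simp only [slot, region]
  split_ifs <;> first | decide | (simp only [Fin.lt_def, Fin.le_def, Fin.ext_iff] at *; omega)

theorem slotRegion_slot (x : Fin n) :
    slotRegion (slot h₁ h₂ x) = if x = h₁ ∨ x = h₂ then none else some (region h₁ h₂ x) := by
  unfold slot
  generalize region h₁ h₂ x = r
  split_ifs <;> simp_all [slotRegion]
  fin_cases r <;> rfl

theorem eq_of_slot_eq (hh : h₁ < h₂) {x y : Fin n} (hxy : slot h₁ h₂ x = slot h₁ h₂ y)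
    (hx : x = h₁ ∨ x = h₂) : x = y := by
  unfold slot at hxy
  generalize region h₁ h₂ y = r at hxy
  rcases hx with rfl | rfl <;> split_ifs at hxy <;> simp_all [hh.ne'] <;> fin_cases r <;> simp_all

set_option maxRecDepth 10000 in
/-- `ρ t` is the slot of the `t`-th entry of a would-be occurrence of `p`. -/
theorem no_occurrence_of_forced : ∀ ρ : Fin 4 → Fin 5, Monotone ρ →
    (∀ t u, ρ t = ρ u → slotRegion (ρ t) = none → t = u) →
    ∀ p : Fin 4 → Fin 4, Injective p →
    ¬ ∀ t u r s, t < u → slotRegion (ρ t) = some r → slotRegion (ρ u) = some s →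
      (p t < p u ↔ p s.succ < p r.castSucc) := by
  decide

theorem ForcedOrder.ppAvoids {α : Type*} [LinearOrder α] {p : Fin 4 → Fin 4} (hp : Injective p)
    (hh : h₁ < h₂) {π : Fin n → Option α} (hholes : ∀ x, π x = none → x = h₁ ∨ x = h₂)
    (hπ : ForcedOrder h₁ h₂ p π) : PPAvoids π p := by
  rintro σ hσ ⟨g, hg, hocc⟩
  refine no_occurrence_of_forced (slot h₁ h₂ ∘ g) ((slot_mono hh).comp hg.monotone) ?_ p hp ?_
  · intro t u htu hnone
    simp only [comp_apply, slotRegion_slot] at htu hnone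
    split_ifs at hnone with ht
    exact hg.injective (eq_of_slot_eq hh htu ht)
  · intro t u r s htu hr hs
    simp only [comp_apply, slotRegion_slot] at hr hs
    split_ifs at hr hs with ht hu
    cases hr
    cases hs
    obtain ⟨v, hv⟩ := Option.ne_none_iff_exists'.1 (mt (hholes _) ht)
    obtain ⟨w, hw⟩ := Option.ne_none_iff_exists'.1 (mt (hholes _) hu)
    rw [← hocc, hσ _ _ _ _ hv hw]
    exact hπ _ _ _ _ (hg htu) hv hw

set_option maxRecDepth 10000 in
/-- Baxter's condition enters here: between regions `r < s` the forced relation puts region `r`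
below region `s` iff `p (s + 1) < p r`, and these three relations form a cycle exactly for
`2413` and `3142`. -/
theorem exists_region_rank : ∀ p : Fin 4 → Fin 4, Injective p → p ≠ ![1, 3, 0, 2] →
    p ≠ ![2, 0, 3, 1] → ∃ β : Fin 3 → Fin 3, ∀ r s, r < s →
      (β r < β s ↔ p s.succ < p r.castSucc) ∧ β r ≠ β s := by
  decide

theorem exists_forcedOrder {p : Fin 4 → Fin 4} (hp : Injective p) (hb₁ : p ≠ ![1, 3, 0, 2])
    (hb₂ : p ≠ ![2, 0, 3, 1]) (hh : h₁ < h₂) :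
    ∃ π : Fin n → Option (Fin (n - 2)), (∀ x, π x = none ↔ x = h₁ ∨ x = h₂) ∧
      (∀ v, ∃! x, π x = some v) ∧ ForcedOrder h₁ h₂ p π := by
  obtain ⟨β, hβ⟩ := exists_region_rank p hp hb₁ hb₂
  let κ : Fin n → Fin 3 ×ₗ ℤ := fun x => toLex (β (region h₁ h₂ x),
    if p (region h₁ h₂ x).succ < p (region h₁ h₂ x).castSucc then (x : ℤ) else -x)
  have hκ : ∀ i j, i < j → (κ i < κ j ↔ p (region h₁ h₂ j).succ < p (region h₁ h₂ i).castSucc) ∧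
      κ i ≠ κ j := by
    intro i j hij
    have hij' : (i : ℤ) < j := by exact_mod_cast hij
    rcases (region_mono (h₁ := h₁) (h₂ := h₂) hij.le).eq_or_lt with hr | hr
    · simp only [κ, hr, Prod.Lex.toLex_lt_toLex, lt_irrefl, false_or, true_and, ne_eq, toLex_inj,
        Prod.mk.injEq]
      split_ifs <;> omega
    · simp only [κ, Prod.Lex.toLex_lt_toLex, ne_eq, toLex_inj, Prod.mk.injEq, (hβ _ _ hr).2,
        false_and, or_false, not_false_eq_true, and_true]
      exact (hβ _ _ hr).1
  let V : Finset (Fin n) := {h₁, h₂}ᶜ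
  have hV : Fintype.card V = n - 2 := by
    rw [Fintype.card_coe, card_compl, card_pair hh.ne, Fintype.card_fin]
  obtain ⟨e, he⟩ := exists_equiv_fin_lt_iff hV (κ := fun x : V => κ x) fun x y hxy => by
    by_contra hne
    rcases (Subtype.coe_ne_coe.2 hne).lt_or_gt with h | h
    exacts [(hκ _ _ h).2 hxy, (hκ _ _ h).2 hxy.symm]
  refine ⟨fun x => if hx : x ∈ V then some (e ⟨x, hx⟩) else none,
    fun x => by simp [V, or_iff_not_imp_left], fun v => ?_, fun i j v w hij hv hw => ?_⟩
  · refine ⟨e.symm v, by simp, fun x hx => ?_⟩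
    dsimp only at hx
    split_ifs at hx with hxV
    rw [← Option.some_inj.1 hx, Equiv.symm_apply_apply]
  · dsimp only at hv hw
    split_ifs at hv hw with hi hj
    rw [← Option.some_inj.1 hv, ← Option.some_inj.1 hw, he]
    exact (hκ i j hij).1

theorem ForcedOrder.eq {m : ℕ} {p : Fin 4 → Fin 4} {π π' : Fin n → Option (Fin m)}
    (hπ : ∀ v, ∃! x, π x = some v) (hπ' : ∀ v, ∃! x, π' x = some v)
    (hnone : ∀ x, π x = none ↔ π' x = none) (hf : ForcedOrder h₁ h₂ p π)
    (hf' : ForcedOrder h₁ h₂ p π') : π = π' := by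
  refine eq_of_none_iff_of_lt_iff hπ hπ' hnone fun x y v w v' w' hv hw hv' hw' => ?_
  rcases lt_trichotomy x y with hxy | rfl | hxy
  · exact (hf x y v w hxy hv hw).trans (hf' x y v' w' hxy hv' hw').symm
  · simp_all
  · have hne : w ≠ v := fun h => hxy.ne ((hπ w).unique hw (h ▸ hv))
    have hne' : w' ≠ v' := fun h => hxy.ne ((hπ' w').unique hw' (h ▸ hv'))
    rw [← not_iff_not, not_lt, not_lt, hne.le_iff_lt, hne'.le_iff_lt]
    exact (hf y x w v hxy hw hv).trans (hf' y x w' v' hxy hw' hv').symm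

theorem existsUnique_ppAvoids {p : Fin 4 → Fin 4} (hp : Injective p) (hb₁ : p ≠ ![1, 3, 0, 2])
    (hb₂ : p ≠ ![2, 0, 3, 1]) (hh : h₁ < h₂) :
    ∃! π : Fin n → Option (Fin (n - 2)),
      ((∀ x, π x = none ↔ x = h₁ ∨ x = h₂) ∧ ∀ v, ∃! x, π x = some v) ∧ PPAvoids π p := by
  obtain ⟨π, hnone, hπ, hf⟩ := exists_forcedOrder hp hb₁ hb₂ hh
  refine ⟨π, ⟨⟨hnone, hπ⟩, hf.ppAvoids hp hh fun x => (hnone x).1⟩, ?_⟩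
  rintro π' ⟨⟨hnone', hπ'⟩, hav'⟩
  have hf' := ForcedOrder.of_ppAvoids hp hh hnone' (fun x y v hx hy => (hπ' v).unique hx hy) hav'
  exact hf'.eq hπ' hπ (fun x => (hnone' x).trans (hnone x).symm) hf

theorem existsUnique_ppAvoids_with_holes {p : Fin 4 → Fin 4} (hp : Injective p)
    (hb₁ : p ≠ ![1, 3, 0, 2]) (hb₂ : p ≠ ![2, 0, 3, 1]) {S : Finset (Fin n)} (hS : S.card = 2) :
    ∃! π : Fin n → Option (Fin (n - 2)),
      (IsPPerm 2 π ∧ PPAvoids π p) ∧ ({x | π x = none} : Finset (Fin n)) = S := by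
  obtain ⟨a, b, hab, rfl⟩ := card_eq_two.1 hS
  wlog hlt : a < b generalizing a b
  · rw [pair_comm]
    exact this b a hab.symm (pair_comm a b ▸ hS) (hab.lt_or_gt.resolve_left hlt)
  refine existsUnique_congr (fun π => ?_) |>.2 (existsUnique_ppAvoids hp hb₁ hb₂ hlt)
  have holes : ({x | π x = none} : Finset (Fin n)) = {a, b} ↔ ∀ x, π x = none ↔ x = a ∨ x = b := by
    simp [Finset.ext_iff]
  rw [IsPPerm, holes]
  exact ⟨fun ⟨⟨⟨_, hπ⟩, hav⟩, hnone⟩ => ⟨⟨hnone, hπ⟩, hav⟩,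
    fun ⟨⟨hnone, hπ⟩, hav⟩ => ⟨⟨⟨(congrArg card (holes.2 hnone)).trans hS, hπ⟩, hav⟩, hnone⟩⟩

end TwoHoles

/-- For every pattern of length 4 other than `2413` and `3142` (the Baxter
permutations of length 4), `s_n^2(p) = C(n,2)` for all `n ≥ 2`. -/
theorem length_four_baxter_count (p : Fin 4 → Fin 4) (hp : Function.Bijective p)
    (h1 : p ≠ ![1, 3, 0, 2]) (h2 : p ≠ ![2, 0, 3, 1]) :
    ∀ n : ℕ, 2 ≤ n → snk n 2 p = n.choose 2 := by
  intro n _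
  let holes : {π : Fin n → Option (Fin (n - 2)) // IsPPerm 2 π ∧ PPAvoids π p} →
      {S : Finset (Fin n) // S.card = 2} := fun π =>
    ⟨({x | π.1 x = none} : Finset (Fin n)), π.2.1.1⟩
  have hholes : Bijective holes := (bijective_iff_existsUnique _).2 fun S => by
    obtain ⟨π, hπ, huniq⟩ := existsUnique_ppAvoids_with_holes hp.injective h1 h2 S.2
    exact ⟨⟨π, hπ.1⟩, Subtype.ext hπ.2,
      fun π' h => Subtype.ext (huniq π' ⟨π'.2, congrArg Subtype.val h⟩)⟩
  rw [snk, Nat.card_eq_of_bijective holes hholes, Nat.card_eq_fintype_card,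
    Fintype.card_finset_len, Fintype.card_fin]
end
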